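/- Let n ≥ 1, d ≥ 1, and let p₁, …, p_k be k distinct points of the complex projective space ℙⁿ (represented by k nonzero vectors in ℂ^{n+1} that are pairwise non-proportional), with k ≤ d + 1. Then these points impose k independent conditions on hypersurfaces of degree d; precisely, the ℂ-linear subspace of the space of homogeneous polynomials of degree d in the variables x₀, …, x_n consisting of those polynomials vanishing at all of p₁, …, p_k has codimension exactly k in the full space of homogeneous polynomials of degree d. -/
import Mathlib


open MvPolynomial Module


/-- Turn a dual functional into a degree-1 polynomial. -/
noncomputable def dualToPoly {n : ℕ} (ℓ : Module.Dual ℂ (Fin n → ℂ)) :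
    MvPolynomial (Fin n) ℂ :=
  ∑ m : Fin n, MvPolynomial.C (ℓ (Pi.single m 1)) * MvPolynomial.X m

lemma dualToPoly_isHomogeneous {n : ℕ} (ℓ : Module.Dual ℂ (Fin n → ℂ)) :
    (dualToPoly ℓ).IsHomogeneous 1 :=
  IsHomogeneous.sum _ _ _ fun m _ => isHomogeneous_C_mul_X _ m

lemma aeval_dualToPoly {n : ℕ} (ℓ : Module.Dual ℂ (Fin n → ℂ)) (v : Fin n → ℂ) :
    aeval v (dualToPoly ℓ) = ℓ v := by
  have hv : v = ∑ m : Fin n, v m • (Pi.single m 1 : Fin n → ℂ) := by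
    ext j; simp [Finset.sum_apply, Pi.single_apply]
  rw [dualToPoly]
  simp only [map_sum, map_mul, aeval_C, aeval_X, algebraMap_eq]
  conv_rhs => rw [hv]
  rw [map_sum]
  simp [mul_comm]

/-- Existence of a separating dual functional. -/
lemma exists_dual_sep {m : ℕ} {v w : Fin m → ℂ} (hv : v ≠ 0)
    (hvw : ∀ c : ℂ, w ≠ c • v) :
    ∃ ℓ : Module.Dual ℂ (Fin m → ℂ), ℓ w = 0 ∧ ℓ v ≠ 0 := by
  have hnm : v ∉ Submodule.span ℂ {w} := by
    intro h
    rcases Submodule.mem_span_singleton.1 h with ⟨a, ha⟩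
    by_cases ha0 : a = 0
    · exact hv (by rw [← ha, ha0, zero_smul])
    · exact hvw a⁻¹ (by rw [← ha, smul_smul, inv_mul_cancel₀ ha0, one_smul])
  obtain ⟨ℓ, hℓv, hℓmap⟩ :=
    (Submodule.span ℂ {w}).exists_dual_map_eq_bot_of_notMem hnm inferInstance
  refine ⟨ℓ, ?_, hℓv⟩
  have : ℓ w ∈ (Submodule.span ℂ {w}).map ℓ :=
    Submodule.mem_map_of_mem (Submodule.mem_span_singleton_self w)
  rwa [hℓmap, Submodule.mem_bot] at this

/-- Any set of `k ≤ d + 1` distinct points of `ℙⁿ` (given by pairwise non-proportional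
nonzero vectors in `ℂ^{n+1}`) imposes exactly `k` independent conditions on homogeneous
polynomials of degree `d`: the subspace of degree-`d` forms vanishing at all the points
has codimension exactly `k`. -/
theorem points_impose_independent_conditions
    (n d k : ℕ) (hn : 1 ≤ n) (hd : 1 ≤ d) (hk : k ≤ d + 1)
    (p : Fin k → (Fin (n + 1) → ℂ))
    (hp0 : ∀ i, p i ≠ 0)
    (hpp : ∀ i j, i ≠ j → ∀ c : ℂ, p j ≠ c • p i) :
    finrank ℂ
        ↥((homogeneousSubmodule (Fin (n + 1)) ℂ d) ⊓
            ⨅ i : Fin k, LinearMap.ker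
              ((aeval (p i) : MvPolynomial (Fin (n + 1)) ℂ →ₐ[ℂ] ℂ).toLinearMap))
      + k
    = finrank ℂ ↥(homogeneousSubmodule (Fin (n + 1)) ℂ d) := by
  classical
  set V := homogeneousSubmodule (Fin (n + 1)) ℂ d with hV
  have hVle : V ≤ restrictTotalDegree (Fin (n + 1)) ℂ d := fun f hf => by
    rw [mem_restrictTotalDegree]
    exact IsHomogeneous.totalDegree_le hf
  haveI : FiniteDimensional ℂ V := Submodule.finiteDimensional_of_le hVle
  set L : V →ₗ[ℂ] (Fin k → ℂ) :=
    (LinearMap.pi fun i =>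
      (aeval (p i) : MvPolynomial (Fin (n + 1)) ℂ →ₐ[ℂ] ℂ).toLinearMap) ∘ₗ V.subtype with hL
  -- identify the given submodule with the image of ker L
  have hker : LinearMap.ker L =
      Submodule.comap V.subtype
        (⨅ i : Fin k, LinearMap.ker
          ((aeval (p i) : MvPolynomial (Fin (n + 1)) ℂ →ₐ[ℂ] ℂ).toLinearMap)) := by
    ext f
    simp [hL, LinearMap.mem_ker, Submodule.mem_iInf, funext_iff]
  have hS : (V ⊓ ⨅ i : Fin k, LinearMap.ker
        ((aeval (p i) : MvPolynomial (Fin (n + 1)) ℂ →ₐ[ℂ] ℂ).toLinearMap))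
      = Submodule.map V.subtype (LinearMap.ker L) := by
    rw [hker, Submodule.map_comap_subtype]
  -- surjectivity of L
  have hsurj : Function.Surjective L := by
    -- separating functionals
    have hsep : ∀ i : Fin k, ∃ f : MvPolynomial (Fin (n + 1)) ℂ,
        f ∈ V ∧ aeval (p i) f ≠ 0 ∧ ∀ j, j ≠ i → aeval (p j) f = 0 := by
      intro i
      -- functional nonzero at p i
      obtain ⟨ℓ₀, hℓ₀⟩ : ∃ ℓ : Module.Dual ℂ (Fin (n + 1) → ℂ), ℓ (p i) ≠ 0 := by
        by_contra h
        push_neg at h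
        exact hp0 i ((Module.forall_dual_apply_eq_zero_iff ℂ (p i)).1 h)
      -- for each j ≠ i, a functional vanishing at p j but not p i
      choose ℓ hℓ using fun j : {j : Fin k // j ≠ i} =>
        exists_dual_sep (hp0 i) (hpp i j (Ne.symm j.2))
      set f : MvPolynomial (Fin (n + 1)) ℂ :=
        (∏ j : {j : Fin k // j ≠ i}, dualToPoly (ℓ j)) *
          (dualToPoly ℓ₀) ^ (d - (k - 1)) with hf
      have hcard : Fintype.card {j : Fin k // j ≠ i} = k - 1 := by
        simp [Fintype.card_subtype_compl]
      have hkd : k - 1 ≤ d := by omega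
      have hhom : f.IsHomogeneous d := by
        have h1 : (∏ j : {j : Fin k // j ≠ i}, dualToPoly (ℓ j)).IsHomogeneous (k - 1) := by
          have := IsHomogeneous.prod Finset.univ
            (fun j : {j : Fin k // j ≠ i} => dualToPoly (ℓ j)) (fun _ => 1)
            (fun j _ => dualToPoly_isHomogeneous (ℓ j))
          simpa [hcard] using this
        have h2 : ((dualToPoly ℓ₀) ^ (d - (k - 1))).IsHomogeneous (d - (k - 1)) := by
          simpa using (dualToPoly_isHomogeneous ℓ₀).pow (d - (k - 1))
        have := h1.mul h2
        rwa [Nat.add_sub_cancel' hkd] at this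
      refine ⟨f, hhom, ?_, ?_⟩
      · rw [hf, map_mul, map_prod, map_pow, aeval_dualToPoly]
        refine mul_ne_zero (Finset.prod_ne_zero_iff.2 fun j _ => ?_) (pow_ne_zero _ hℓ₀)
        rw [aeval_dualToPoly]
        exact (hℓ j).2
      · intro j hj
        rw [hf, map_mul, map_prod]
        have : aeval (p j) (dualToPoly (ℓ ⟨j, hj⟩)) = 0 := by
          rw [aeval_dualToPoly]; exact (hℓ ⟨j, hj⟩).1
        rw [Finset.prod_eq_zero (Finset.mem_univ (⟨j, hj⟩ : {j : Fin k // j ≠ i})) this,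
          zero_mul]
    choose f hfV hfne hfzero using hsep
    intro v
    refine ⟨∑ i : Fin k, (v i / aeval (p i) (f i)) •
      (⟨f i, hfV i⟩ : V), ?_⟩
    ext j
    rw [hL]
    simp only [map_sum, map_smul, LinearMap.comp_apply, Finset.sum_apply, Pi.smul_apply,
      LinearMap.pi_apply, Submodule.coe_subtype, AlgHom.toLinearMap_apply]
    rw [Finset.sum_eq_single j]
    · rw [smul_eq_mul, div_mul_cancel₀ _ (hfne j)]
    · intro i _ hij
      simp [hfzero i j (Ne.symm hij)]
    · intro h; exact absurd (Finset.mem_univ j) h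
  -- rank-nullity
  have hrn := LinearMap.finrank_range_add_finrank_ker L
  rw [LinearMap.range_eq_top.2 hsurj] at hrn
  have htop : finrank ℂ (⊤ : Submodule ℂ (Fin k → ℂ)) = k := by
    simp [finrank_top]
  rw [hS, Submodule.finrank_map_subtype_eq]
  omega
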